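/- Let M be a positive integer and f : ℤ → ℂ an even M-periodic function (f(-n) = f(n)). Define θ(τ; f) := f(0) + 2·Θ(τ; 0, f, M) for τ ∈ ℍ. Then for every τ ∈ ℍ: θ(τ; f) = (τ/i)^{-1/2} · θ(-1/τ; U_M f), where U_M f is the discrete Fourier transform of f (an even M-periodic function) and (τ/i)^{-1/2} is the principal branch. -/

import Mathlib

/-!
Split `n ∈ ℤ` into residue classes `n = ℓ + kM`. The class of `ℓ` contributes
`e^{iπℓ²τ/M} θ₂(ℓτ, Mτ)`, and Jacobi's functional equation turns this into
`(-iMτ)^{-1/2} θ₂(ℓ/M, -1/(Mτ))`, the Gaussian prefactor cancelling. Expanding `θ₂(ℓ/M, ·)` and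
summing over `ℓ` with weights `f(ℓ)` gives the theta series of `U_M f` at `-1/τ`. Evenness of
`f`, inherited by `U_M f`, folds each series over `ℤ` into the form `h(0) + 2Θ(·; 0, h, M)`.
-/

open Complex

/-- The partial theta series `Θ(τ; ν, f, M) = Σ_{n≥1} n^ν f(n) e^{iπn²τ/M}`. -/
noncomputable def theta (M : ℕ) (ν : ℕ) (f : ℤ → ℂ) (τ : ℂ) : ℂ :=
  ∑' n : ℕ, ((n : ℂ) + 1) ^ ν * f (n + 1) *
    Complex.exp (Real.pi * Complex.I * ((n : ℂ) + 1) ^ 2 * τ / M)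

/-- The discrete Fourier transform `U_M f` of an `M`-periodic function `f : ℤ → ℂ`. -/
noncomputable def dft (M : ℕ) (f : ℤ → ℂ) (n : ℤ) : ℂ :=
  (Real.sqrt M : ℂ)⁻¹ * ∑ ℓ ∈ Finset.range M, f ℓ *
    Complex.exp (-2 * Real.pi * Complex.I * ℓ * n / M)

open Real Finset

namespace Function.Periodic

variable {β : Type*} {M : ℕ} {g : ℤ → β}

lemma eq_emod (hg : Periodic g M) (n : ℤ) : g n = g (n % M) := by
  rw [Int.emod_def, mul_comm, ← smul_eq_mul, hg.sub_zsmul_eq]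

lemma sum_range_comp_neg [AddCommMonoid β] (hg : Periodic g M) :
    ∑ ℓ ∈ range M, g (-ℓ) = ∑ ℓ ∈ range M, g ℓ := by
  rcases M with _ | M
  · simp
  rw [sum_range_succ', sum_range_succ' (fun ℓ : ℕ => g ℓ), ← sum_range_reflect]
  refine congrArg (· + _) (sum_congr rfl fun i hi => ?_)
  rw [← hg]
  congr 1
  have hiM : 1 + i ≤ M := by have := mem_range.mp hi; omega
  push_cast [Nat.sub_sub, Nat.cast_sub hiM]
  ring

lemma norm_le_sum_range {g : ℤ → ℂ} [NeZero M] (hg : Periodic g M) (n : ℤ) :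
    ‖g n‖ ≤ ∑ ℓ ∈ range M, ‖g ℓ‖ := by
  have hM : (0 : ℤ) < M := by exact_mod_cast Nat.pos_of_neZero M
  rw [hg.eq_emod, ← Int.toNat_of_nonneg (Int.emod_nonneg n hM.ne')]
  exact single_le_sum (f := fun ℓ : ℕ => ‖g ℓ‖) (fun _ _ => norm_nonneg _)
    (mem_range.mpr (by have := Int.emod_lt_of_pos n hM; omega))

end Function.Periodic

lemma Complex.ofReal_mul_cpow {r : ℝ} (hr : 0 < r) (z s : ℂ) :
    ((r : ℂ) * z) ^ s = (r : ℂ) ^ s * z ^ s := by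
  rcases eq_or_ne z 0 with rfl | hz
  · rcases eq_or_ne s 0 with rfl | hs <;> simp [*]
  have hr' : (r : ℂ) ≠ 0 := ofReal_ne_zero.mpr hr.ne'
  rw [cpow_def_of_ne_zero (mul_ne_zero hr' hz), log_ofReal_mul hr hz, ofReal_log hr.le, add_mul,
    exp_add, ← cpow_def_of_ne_zero hr', ← cpow_def_of_ne_zero hz]

lemma periodic_cexp_neg_two_pi_mul (M : ℕ) (n : ℤ) :
    Function.Periodic (fun ℓ : ℤ => cexp (-2 * π * I * ℓ * n / M)) M := by
  intro ℓ
  rcases eq_or_ne M 0 with rfl | hM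
  · simp
  rw [exp_eq_exp_iff_exists_int]
  exact ⟨-n, by push_cast; field_simp; ring⟩

lemma dft_periodic (M : ℕ) (f : ℤ → ℂ) : Function.Periodic (dft M f) M := by
  intro n
  unfold dft
  congr 2 with ℓ
  have hper := periodic_cexp_neg_two_pi_mul M ℓ n
  simp only [Int.cast_add, Int.cast_natCast] at hper
  push_cast
  rw [mul_right_comm _ (ℓ : ℂ), hper, mul_right_comm _ (n : ℂ)]

lemma dft_even {M : ℕ} {f : ℤ → ℂ} (hf : Function.Periodic f M) (heven : Function.Even f) :
    Function.Even (dft M f) := by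
  intro n
  have hsum := (hf.mul (periodic_cexp_neg_two_pi_mul M n)).sum_range_comp_neg
  simp only [Pi.mul_apply, heven _, Int.cast_neg, Int.cast_natCast] at hsum
  unfold dft
  rw [← hsum]
  congr 2 with ℓ
  push_cast
  ring_nf

noncomputable def fullTheta (M : ℕ) (g : ℤ → ℂ) (t : ℂ) : ℂ :=
  ∑' n : ℤ, g n * cexp (π * I * n ^ 2 * t / M)

lemma cexp_eq_jacobiTheta₂_term (M : ℕ) (n : ℤ) (t : ℂ) :
    cexp (π * I * n ^ 2 * t / M) = jacobiTheta₂_term n 0 (t / M) := by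
  rw [jacobiTheta₂_term]
  ring_nf

lemma summable_mul_cexp_of_periodic {M : ℕ} [NeZero M] {g : ℤ → ℂ}
    (hg : Function.Periodic g M) {t : ℂ} (ht : 0 < t.im) :
    Summable fun n : ℤ => g n * cexp (π * I * n ^ 2 * t / M) := by
  have hsum : Summable fun n : ℤ => jacobiTheta₂_term n 0 (t / M) :=
    (summable_jacobiTheta₂_term_iff 0 _).mpr <| by
      rw [div_natCast_im]; exact div_pos ht (Nat.cast_pos.mpr (Nat.pos_of_neZero M))
  refine .of_norm_bounded (hsum.norm.mul_left (∑ ℓ ∈ range M, ‖g ℓ‖)) fun n => ?_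
  rw [norm_mul, cexp_eq_jacobiTheta₂_term]
  exact mul_le_mul_of_nonneg_right (hg.norm_le_sum_range n) (norm_nonneg _)

lemma fullTheta_eq_of_even {M : ℕ} {g : ℤ → ℂ} (heven : Function.Even g) {t : ℂ}
    (hs : Summable fun n : ℤ => g n * cexp (π * I * n ^ 2 * t / M)) :
    fullTheta M g t = g 0 + 2 * theta M 0 g t := by
  rw [fullTheta, tsum_int_eq_zero_add_two_mul_tsum_pnat (fun n => by simp [heven n]) hs,
    tsum_pnat_eq_tsum_succ (f := fun n : ℕ => g n * cexp (π * I * (n : ℤ) ^ 2 * t / M)), theta]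
  simp

lemma fullTheta_eq_sum_jacobiTheta₂ {M : ℕ} [NeZero M] {g : ℤ → ℂ}
    (hg : Function.Periodic g M) {t : ℂ} (ht : 0 < t.im) :
    fullTheta M g t = ∑ ℓ ∈ range M,
      g ℓ * cexp (π * I * ℓ ^ 2 * t / M) * jacobiTheta₂ (ℓ * t) (M * t) := by
  have hM : (M : ℂ) ≠ 0 := Nat.cast_ne_zero.mpr (NeZero.ne M)
  obtain ⟨e, he⟩ : ∃ e : Fin M × ℤ ≃ ℤ, ∀ p, e p = p.2 * M + p.1 :=
    ⟨(Equiv.prodComm _ _).trans (Int.divModEquiv M).symm, fun _ => rfl⟩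
  have hs : Summable fun p => g (e p) * cexp (π * I * (e p : ℤ) ^ 2 * t / M) :=
    e.summable_iff.mpr (summable_mul_cexp_of_periodic hg ht)
  rw [fullTheta, ← e.tsum_eq, hs.tsum_prod' hs.prod_factor, tsum_fintype,
    ← Fin.sum_univ_eq_sum_range (fun ℓ => g ℓ * cexp (π * I * ℓ ^ 2 * t / M) *
      jacobiTheta₂ (ℓ * t) (M * t))]
  refine sum_congr rfl fun ℓ _ => ?_
  -- n = kM + ℓ gives e^{iπn²t/M} = e^{iπℓ²t/M} e^{2πikℓt + iπk²Mt}
  have hterm (k : ℤ) : g (e (ℓ, k)) * cexp (π * I * (e (ℓ, k) : ℤ) ^ 2 * t / M) =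
      g ℓ * cexp (π * I * (ℓ : ℂ) ^ 2 * t / M) * jacobiTheta₂_term k (ℓ * t) (M * t) := by
    have hgk : g (k * M + ℓ) = g ℓ := by rw [add_comm, ← smul_eq_mul, hg.zsmul]
    rw [he, hgk, jacobiTheta₂_term, mul_assoc (g _), ← Complex.exp_add]
    congr 2
    push_cast
    field_simp
    ring
  simp only [hterm, tsum_mul_left, jacobiTheta₂]

lemma fullTheta_dft (M : ℕ) (f : ℤ → ℂ) {t : ℂ} (ht : 0 < t.im) :
    fullTheta M (dft M f) t =
      (Real.sqrt M : ℂ)⁻¹ * ∑ ℓ ∈ range M, f ℓ * jacobiTheta₂ (ℓ / M) (t / M) := by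
  have hterm (n : ℤ) : dft M f n * cexp (π * I * n ^ 2 * t / M) = ∑ ℓ ∈ range M,
      (Real.sqrt M : ℂ)⁻¹ * (f ℓ * jacobiTheta₂_term n (-(ℓ / M)) (t / M)) := by
    rw [dft, mul_assoc, sum_mul, mul_sum]
    refine sum_congr rfl fun ℓ _ => ?_
    rw [mul_assoc (f ℓ), jacobiTheta₂_term, ← Complex.exp_add]
    ring_nf
  have hsum (ℓ : ℕ) (hℓ : ℓ ∈ range M) : Summable fun n : ℤ =>
      (Real.sqrt M : ℂ)⁻¹ * (f ℓ * jacobiTheta₂_term n (-(ℓ / M)) (t / M)) := by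
    have hM : (0 : ℝ) < M := Nat.cast_pos.mpr (Nat.zero_lt_of_lt (mem_range.mp hℓ))
    refine (((summable_jacobiTheta₂_term_iff _ _).mpr ?_).mul_left _).mul_left _
    rw [div_natCast_im]
    exact div_pos ht hM
  rw [fullTheta, tsum_congr hterm, Summable.tsum_finsetSum hsum, mul_sum]
  refine sum_congr rfl fun ℓ _ => ?_
  rw [tsum_mul_left, tsum_mul_left, ← jacobiTheta₂, jacobiTheta₂_neg_left]

lemma jacobiTheta₂_mul_self_functional_equation (a τ : ℂ) :
    jacobiTheta₂ (a * τ) τ =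
      1 / (-I * τ) ^ (1 / 2 : ℂ) * cexp (-π * I * a ^ 2 * τ) * jacobiTheta₂ a (-1 / τ) := by
  rcases eq_or_ne τ 0 with rfl | hτ
  · simp [jacobiTheta₂_undef]
  rw [jacobiTheta₂_functional_equation, mul_div_cancel_right₀ _ hτ]
  congr 3
  field_simp

lemma one_div_neg_I_mul_ofReal_mul_cpow_half {r : ℝ} (hr : 0 < r) (τ : ℂ) :
    1 / (-I * (r * τ)) ^ (1 / 2 : ℂ) = (Real.sqrt r : ℂ)⁻¹ * (τ / I) ^ (-(1 / 2) : ℂ) := by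
  have hsqrt : (r : ℂ) ^ (1 / 2 : ℂ) = Real.sqrt r := by
    rw [Real.sqrt_eq_rpow, ofReal_cpow hr.le]
    norm_num
  rw [show -I * (r * τ) = r * (τ / I) by rw [div_I]; ring, ofReal_mul_cpow hr, hsqrt, cpow_neg,
    one_div, mul_inv]

/-- For an even `M`-periodic `f`, the full theta series
`θ(τ;f) = f(0) + 2Θ(τ;0,f,M)` satisfies the weight 1/2 modularity relation
`θ(τ;f) = (τ/i)^{-1/2} θ(-1/τ; U_M f)` for all `τ ∈ ℍ`. -/
theorem statement9 (M : ℕ) (hM : 0 < M) (f : ℤ → ℂ)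
    (hf : ∀ n : ℤ, f (n + M) = f n) (heven : ∀ n : ℤ, f (-n) = f n)
    (τ : ℂ) (hτ : 0 < τ.im) :
    f 0 + 2 * theta M 0 f τ
      = (τ / Complex.I) ^ (-(1 / 2) : ℂ) *
        (dft M f 0 + 2 * theta M 0 (dft M f) (-1 / τ)) := by
  have : NeZero M := ⟨hM.ne'⟩
  have hτ' : 0 < (-1 / τ).im := by
    simpa [neg_div, inv_neg] using UpperHalfPlane.im_inv_neg_coe_pos ⟨τ, hτ⟩
  rw [← fullTheta_eq_of_even heven (summable_mul_cexp_of_periodic hf hτ),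
    ← fullTheta_eq_of_even (dft_even hf heven)
      (summable_mul_cexp_of_periodic (dft_periodic M f) hτ'),
    fullTheta_eq_sum_jacobiTheta₂ hf hτ, fullTheta_dft M f hτ', mul_sum, mul_sum]
  refine sum_congr rfl fun ℓ _ => ?_
  have hM0 : (M : ℂ) ≠ 0 := Nat.cast_ne_zero.mpr hM.ne'
  rw [show (ℓ : ℂ) * τ = ℓ / M * (M * τ) by field_simp, jacobiTheta₂_mul_self_functional_equation,
    ← ofReal_natCast M, one_div_neg_I_mul_ofReal_mul_cpow_half (Nat.cast_pos.mpr hM),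
    ofReal_natCast, show -1 / (M * τ) = -1 / τ / M by ring]
  have hexp : cexp (π * I * ℓ ^ 2 * τ / M) * cexp (-π * I * (ℓ / M) ^ 2 * (M * τ)) = 1 := by
    rw [← Complex.exp_add, ← Complex.exp_zero]
    congr 1
    field_simp
    ring
  linear_combination (Real.sqrt M : ℂ)⁻¹ * (τ / I) ^ (-(1 / 2) : ℂ) * f ℓ *
    jacobiTheta₂ (ℓ / M) (-1 / τ / M) * hexp
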